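/- (Theorem 3.1) Let d ≥ 1, r > 0, θ ∈ S^{d-1}. Let w_1, w_2 : ℤ^d → ℂ \ {0} and u : ℤ^d → ℂ satisfy w_1(z) = w_2(z) = 1 and u(z) = 0 for all z ∉ B_r ∩ ℤ^d. Define F_θ : ℤ^d → GL(2,ℂ) by F_θ(z) = [[w_1(z), w_2(z)u(z)],[0,1]]. Then for every oriented line γ with direction θ containing at least one lattice point, S(F_θ)(γ) = [[∏_{y ∈ γ ∩ ℤ^d} w_1(y), P_W u(γ)],[0,1]], where P_W u(γ) = Σ_{y ∈ γ ∩ ℤ^d} W(y,θ) u(y) and W(y,θ) = w_2(y) · ∏_{ζ ∈ γ ∩ ℤ^d, (ζ−y)·θ > 0} w_1(ζ). -/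

import Mathlib

noncomputable section

open Matrix

/-- Embedding of the lattice `ℤ^d` into Euclidean `ℝ^d`. -/
def emb {d : ℕ} (z : Fin d → ℤ) : EuclideanSpace ℝ (Fin d) := WithLp.toLp 2 (fun i => (z i : ℝ))

/- Ordered product of `Φ` over `supp`: the factors are multiplied so that larger values
of `key` contribute factors further to the left (the value is `1` if no strictly
`key`-decreasing enumeration of `supp` by a list exists). -/
open Classical in
noncomputable def oprodBy {α G : Type*} [Monoid G] (Φ : α → G) (key : α → ℝ) (supp : Set α) : G :=
  if h : ∃ l : List α, l.Pairwise (fun a b => key b < key a) ∧ ∀ a, a ∈ l ↔ a ∈ supp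
  then (h.choose.map Φ).prod else 1

/-- The discrete non-abelian X-ray transform of `F` along the oriented line through `x`
with direction `θ`: the ordered product of `F y` over lattice points `y` on the line,
the point furthest along the orientation contributing the leftmost factor. -/
noncomputable def discS {d : ℕ} {G : Type*} [Monoid G] (F : (Fin d → ℤ) → G)
    (x θ : EuclideanSpace ℝ (Fin d)) : G :=
  oprodBy F (fun z => ∑ i, ((z i : ℝ) - x i) * θ i)
    {z | (∃ t : ℝ, emb z = x + t • θ) ∧ F z ≠ 1}

/-!
Matrices `!![a, b; 0, 1]` compose like affine maps `v ↦ a v + b`, so in an ordered product the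
top-left entries simply multiply, while each `b y` reaches the top-right corner multiplied by the
`a`-entries of the factors to its left, i.e. of the lattice points further along the line.
Along a line the lattice points are strictly ordered by `⟪z - x, θ⟫`, and only the finitely many
points of `B_r` have `F_θ z ≠ 1`, so the X-ray transform is a finite ordered list product.
-/
section SortedByKey

variable {α β : Type*} [LinearOrder β] {key : α → β}

theorem exists_list_pairwise_key_gt (s : Finset α) (hkey : Set.InjOn key s) :
    ∃ l : List α, l.Pairwise (fun a b => key b < key a) ∧ ∀ a, a ∈ l ↔ a ∈ s := by
  let l := s.toList.mergeSort fun a b => key b ≤ key a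
  have hperm : l.Perm s.toList := List.mergeSort_perm _ _
  have hsorted : l.Pairwise fun a b => key b ≤ key a := by
    simpa using List.pairwise_mergeSort (le := fun a b => decide (key b ≤ key a))
      (by simpa using fun _ _ _ h₁ h₂ => h₂.trans h₁)
      (by simpa using fun a b => le_total (key b) (key a)) s.toList
  have hmem : ∀ a, a ∈ l ↔ a ∈ s := fun a => hperm.mem_iff.trans Finset.mem_toList
  refine ⟨l, ?_, hmem⟩
  refine (hsorted.and (s.nodup_toList.perm hperm.symm)).imp_of_mem ?_
  rintro a b ha hb ⟨hle, hne⟩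
  exact hle.lt_of_ne fun h => hne (hkey ((hmem a).1 ha) ((hmem b).1 hb) h.symm)

theorem List.Pairwise.eq_of_mem_iff_of_key_gt {l₁ l₂ : List α}
    (h₁ : l₁.Pairwise fun a b => key b < key a) (h₂ : l₂.Pairwise fun a b => key b < key a)
    (h : ∀ a, a ∈ l₁ ↔ a ∈ l₂) : l₁ = l₂ := by
  have : Std.Irrefl fun a b : α => key b < key a := ⟨fun a => lt_irrefl (key a)⟩
  have : Std.Antisymm fun a b : α => key b < key a := ⟨fun a b hab hba => (hab.asymm hba).elim⟩
  exact h₁.eq_of_mem_iff h₂ h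

end SortedByKey

theorem oprodBy_eq_list_prod {α G : Type*} [Monoid G] {Φ : α → G} {key : α → ℝ} {supp : Set α}
    {l : List α} (hl : l.Pairwise fun a b => key b < key a) (hmem : ∀ a, a ∈ l ↔ a ∈ supp) :
    oprodBy Φ key supp = (l.map Φ).prod := by
  have hex : ∃ l : List α, l.Pairwise (fun a b => key b < key a) ∧ ∀ a, a ∈ l ↔ a ∈ supp :=
    ⟨l, hl, hmem⟩
  rw [oprodBy, dif_pos hex,
    hex.choose_spec.1.eq_of_mem_iff_of_key_gt hl fun a => (hex.choose_spec.2 a).trans (hmem a).symm]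

theorem list_prod_map_upperTriangular {α β R : Type*} [LinearOrder β] [CommSemiring R]
    (a b : α → R) (key : α → β) {l : List α} (hl : l.Pairwise fun y z => key z < key y) :
    (l.map fun y => !![a y, b y; 0, 1]).prod =
      !![(l.map a).prod, (l.map fun y => ((l.filter fun z => key y < key z).map a).prod * b y).sum;
        0, 1] := by
  induction l with
  | nil => simp [Matrix.one_fin_two]
  | cons y l ih =>
    obtain ⟨hy, hl⟩ := List.pairwise_cons.1 hl
    have hfilter_y : (y :: l).filter (fun z => key y < key z) = [] := by
      simpa using fun z hz => (hy z hz).le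
    have hsum : (l.map fun z => (((y :: l).filter fun z' => key z < key z').map a).prod * b z).sum =
        a y * (l.map fun z => ((l.filter fun z' => key z < key z').map a).prod * b z).sum := by
      rw [← List.sum_map_mul_left]
      refine congrArg List.sum (List.map_congr_left fun z hz => ?_)
      simp [hy z hz, mul_assoc]
    simp only [List.map_cons, List.prod_cons, List.sum_cons, ih hl, Matrix.mul_fin_two, hfilter_y,
      hsum]
    simp [add_comm]

@[to_additive]
theorem finprod_mem_eq_list_prod {α M : Type*} [CommMonoid M] (f : α → M) {s : Set α}
    {l : List α} (hl : l.Nodup) (hls : ∀ a ∈ l, a ∈ s) (hsl : ∀ a ∈ s, f a ≠ 1 → a ∈ l) :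
    ∏ᶠ a ∈ s, f a = (l.map f).prod := by
  classical
  rw [finprod_mem_eq_prod_of_subset f (t := l.toFinset), List.prod_toFinset f hl]
  · exact fun a ⟨has, hfa⟩ => List.mem_toFinset.2 (hsl a has hfa)
  · exact fun a ha => hls a (List.mem_toFinset.1 ha)

theorem eq_zero_of_eq_smul_of_inner_eq_zero {E : Type*} [NormedAddCommGroup E]
    [InnerProductSpace ℝ E] {v θ : E} {s : ℝ} (hv : v = s • θ) (hvθ : inner ℝ v θ = 0) : v = 0 := by
  rw [← inner_self_eq_zero (𝕜 := ℝ)]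
  nth_rw 2 [hv]
  rw [inner_smul_right, hvθ, mul_zero]

section LatticeLine

variable {d : ℕ}

theorem emb_injective : Function.Injective (emb (d := d)) := fun a b h =>
  funext fun i => by simpa [emb] using congrArg (fun v : EuclideanSpace ℝ (Fin d) => v i) h

theorem finite_setOf_norm_emb_le (r : ℝ) : {z : Fin d → ℤ | ‖emb z‖ ≤ r}.Finite := by
  refine (isCompact_closedBall (0 : Fin d → ℤ) r).finite_of_discrete.subset fun z hz => ?_
  rw [mem_closedBall_zero_iff]
  refine (pi_norm_le_iff_of_nonneg (norm_nonneg (emb z))).2 (fun i => ?_) |>.trans hz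
  simpa [emb, Int.norm_eq_abs] using PiLp.norm_apply_le (emb z) i

def lineKey (x θ : EuclideanSpace ℝ (Fin d)) (z : Fin d → ℤ) : ℝ := ∑ i, ((z i : ℝ) - x i) * θ i

theorem lineKey_eq_inner (x θ : EuclideanSpace ℝ (Fin d)) (z : Fin d → ℤ) :
    lineKey x θ z = inner ℝ (emb z - x) θ := by
  simp [lineKey, PiLp.inner_apply, emb, mul_comm]

theorem lineKey_sub_lineKey (x θ : EuclideanSpace ℝ (Fin d)) (y z : Fin d → ℤ) :
    lineKey x θ z - lineKey x θ y = ∑ i, ((z i : ℝ) - y i) * θ i := by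
  rw [lineKey, lineKey, ← Finset.sum_sub_distrib]
  exact Finset.sum_congr rfl fun i _ => by ring

theorem lineKey_injOn (x θ : EuclideanSpace ℝ (Fin d)) :
    Set.InjOn (lineKey x θ) {z | ∃ t : ℝ, emb z = x + t • θ} := by
  rintro y ⟨s, hy⟩ z ⟨t, hz⟩ h
  refine emb_injective <| sub_eq_zero.1 <|
    eq_zero_of_eq_smul_of_inner_eq_zero (θ := θ) (s := s - t) ?_ ?_
  · rw [hy, hz, sub_smul]; abel
  · rw [lineKey_eq_inner, lineKey_eq_inner] at h
    rw [← sub_sub_sub_cancel_right _ _ x, inner_sub_left, h, sub_self]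

theorem exists_discS_eq_list_prod {G : Type*} [Monoid G] (F : (Fin d → ℤ) → G)
    (x θ : EuclideanSpace ℝ (Fin d))
    (hF : {z | (∃ t : ℝ, emb z = x + t • θ) ∧ F z ≠ 1}.Finite) :
    ∃ l : List (Fin d → ℤ), l.Pairwise (fun a b => lineKey x θ b < lineKey x θ a) ∧
      (∀ a, a ∈ l ↔ (∃ t : ℝ, emb a = x + t • θ) ∧ F a ≠ 1) ∧ discS F x θ = (l.map F).prod := by
  obtain ⟨l, hl, hmem⟩ := exists_list_pairwise_key_gt hF.toFinset
    ((lineKey_injOn x θ).mono fun z hz => (hF.mem_toFinset.1 hz).1)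
  have hmem' : ∀ a, a ∈ l ↔ (∃ t : ℝ, emb a = x + t • θ) ∧ F a ≠ 1 :=
    fun a => (hmem a).trans hF.mem_toFinset
  exact ⟨l, hl, hmem', oprodBy_eq_list_prod hl hmem'⟩

theorem finprod_mem_ahead_eq_list_prod_filter {M : Type*} [CommMonoid M] (f : (Fin d → ℤ) → M)
    (x θ : EuclideanSpace ℝ (Fin d)) {l : List (Fin d → ℤ)} (hl : l.Nodup)
    (hline : ∀ a ∈ l, ∃ t : ℝ, emb a = x + t • θ)
    (hsupp : ∀ a, (∃ t : ℝ, emb a = x + t • θ) → f a ≠ 1 → a ∈ l) (y : Fin d → ℤ) :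
    ∏ᶠ z ∈ {z : Fin d → ℤ | (∃ t : ℝ, emb z = x + t • θ) ∧ 0 < ∑ i, ((z i : ℝ) - y i) * θ i}, f z =
      ((l.filter fun z => lineKey x θ y < lineKey x θ z).map f).prod := by
  refine finprod_mem_eq_list_prod f (hl.filter _) (fun z hz => ?_) (fun z hz hne => ?_) <;>
    simp only [List.mem_filter, decide_eq_true_eq, Set.mem_ofPred_eq, ← lineKey_sub_lineKey x,
      sub_pos] at hz ⊢
  · exact ⟨hline z hz.1, hz.2⟩
  · exact ⟨hsupp z hz.1 hne, hz.2⟩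

end LatticeLine

theorem stmt10_general (d : ℕ) (r : ℝ)
    (θ : EuclideanSpace ℝ (Fin d))
    (w1 w2 u : (Fin d → ℤ) → ℂ)
    (hw1s : ∀ z : Fin d → ℤ, ¬ ‖emb z‖ ≤ r → w1 z = 1)
    (hus : ∀ z : Fin d → ℤ, ¬ ‖emb z‖ ≤ r → u z = 0)
    (Fθ : (Fin d → ℤ) → GL (Fin 2) ℂ)
    (hFθ : ∀ z, (Fθ z : Matrix (Fin 2) (Fin 2) ℂ) = !![w1 z, w2 z * u z; 0, 1])
    (x : Fin d → ℤ) :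
    ((discS Fθ (emb x) θ : GL (Fin 2) ℂ) : Matrix (Fin 2) (Fin 2) ℂ) =
      !![∏ᶠ y ∈ {z : Fin d → ℤ | ∃ t : ℝ, emb z = emb x + t • θ}, w1 y,
         ∑ᶠ y ∈ {z : Fin d → ℤ | ∃ t : ℝ, emb z = emb x + t • θ},
           (w2 y * ∏ᶠ ζ ∈ {ζ : Fin d → ℤ | (∃ t : ℝ, emb ζ = emb x + t • θ) ∧
              0 < ∑ i, ((ζ i : ℝ) - (y i : ℝ)) * θ i}, w1 ζ) * u y;
         0, 1] := by
  classical
  have hFθ_eq_one_iff : ∀ z, Fθ z = 1 ↔ w1 z = 1 ∧ w2 z * u z = 0 := fun z => by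
    simp [Units.ext_iff, hFθ, Matrix.one_fin_two]
  have hfinite : {z | (∃ t : ℝ, emb z = emb x + t • θ) ∧ Fθ z ≠ 1}.Finite :=
    (finite_setOf_norm_emb_le r).subset fun z hz => by
      by_contra h
      exact hz.2 ((hFθ_eq_one_iff z).2 ⟨hw1s z h, by rw [hus z h, mul_zero]⟩)
  obtain ⟨l, hl, hmem, hS⟩ := exists_discS_eq_list_prod Fθ (emb x) θ hfinite
  have hnodup : l.Nodup := hl.imp fun h hab => (hab ▸ h).false
  set γ : Set (Fin d → ℤ) := {z | ∃ t : ℝ, emb z = emb x + t • θ}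
  have hline : ∀ a ∈ l, a ∈ γ := fun a ha => ((hmem a).1 ha).1
  have hmem_of_ne : ∀ a ∈ γ, w1 a ≠ 1 ∨ w2 a * u a ≠ 0 → a ∈ l :=
    fun a ha hne => (hmem a).2 ⟨ha, fun h => by simp_all⟩
  have hprod : ((l.map Fθ).prod : Matrix (Fin 2) (Fin 2) ℂ) =
      (l.map fun y => !![w1 y, w2 y * u y; 0, 1]).prod := by
    rw [← Units.coeHom_apply, map_list_prod, List.map_map]
    exact congrArg List.prod (List.map_congr_left fun z _ => hFθ z)
  rw [hS, hprod, list_prod_map_upperTriangular w1 (fun y => w2 y * u y) _ hl,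
    finprod_mem_eq_list_prod w1 hnodup hline fun a ha hne => hmem_of_ne a ha (Or.inl hne),
    finsum_mem_eq_list_sum _ hnodup hline fun y hy hne => hmem_of_ne y hy <| Or.inr <|
      mul_ne_zero (left_ne_zero_of_mul (left_ne_zero_of_mul hne)) (right_ne_zero_of_mul hne)]
  simp only [finprod_mem_ahead_eq_list_prod_filter w1 (emb x) θ hnodup hline
    fun a ha hne => hmem_of_ne a ha (Or.inl hne)]
  congr! 4
  exact congrArg List.sum (List.map_congr_left fun y _ => by ring)

/-- Theorem 3.1: the discrete non-abelian X-ray transform of the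
upper-triangular matrix function F_θ(z) = [[w₁ z, (w₂ z)(u z)],[0,1]] along a line with
direction θ through a lattice point x equals [[S(w₁)(γ), P_W u(γ)],[0,1]], where
P_W u(γ) = Σ_{y ∈ γ ∩ ℤ^d} W(y,θ) u(y) and W(y,θ) = w₂(y) ∏_{ζ ∈ γ ∩ ℤ^d, (ζ−y)·θ > 0} w₁(ζ). -/
theorem stmt10 (d : ℕ) (hd : 1 ≤ d) (r : ℝ) (hr : 0 < r)
    (θ : EuclideanSpace ℝ (Fin d)) (hθ : ‖θ‖ = 1)
    (w1 w2 u : (Fin d → ℤ) → ℂ)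
    (hw1 : ∀ z, w1 z ≠ 0) (hw2 : ∀ z, w2 z ≠ 0)
    (hw1s : ∀ z : Fin d → ℤ, ¬ ‖emb z‖ ≤ r → w1 z = 1)
    (hw2s : ∀ z : Fin d → ℤ, ¬ ‖emb z‖ ≤ r → w2 z = 1)
    (hus : ∀ z : Fin d → ℤ, ¬ ‖emb z‖ ≤ r → u z = 0)
    (Fθ : (Fin d → ℤ) → GL (Fin 2) ℂ)
    (hFθ : ∀ z, (Fθ z : Matrix (Fin 2) (Fin 2) ℂ) = !![w1 z, w2 z * u z; 0, 1])
    (x : Fin d → ℤ) :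
    ((discS Fθ (emb x) θ : GL (Fin 2) ℂ) : Matrix (Fin 2) (Fin 2) ℂ) =
      !![∏ᶠ y ∈ {z : Fin d → ℤ | ∃ t : ℝ, emb z = emb x + t • θ}, w1 y,
         ∑ᶠ y ∈ {z : Fin d → ℤ | ∃ t : ℝ, emb z = emb x + t • θ},
           (w2 y * ∏ᶠ ζ ∈ {ζ : Fin d → ℤ | (∃ t : ℝ, emb ζ = emb x + t • θ) ∧
              0 < ∑ i, ((ζ i : ℝ) - (y i : ℝ)) * θ i}, w1 ζ) * u y;
         0, 1] :=
  stmt10_general d r θ w1 w2 u hw1s hus Fθ hFθ x
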